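/- arXiv:1702.08286 — 10 statements merged into one kernel-verified Lean document; each statement's English description precedes it below -/
import Mathlib

section
/- Let P ≥ 2 be an integer, Δ ≥ 0 a real number, and let e, f : Fin P → ℝ be two utility vectors. Suppose f lies in the fair region (|f i − f j| ≤ Δ for all i, j), e lies in the utilitarian region (it is not the case that |e i − e j| ≤ Δ for all i, j), and u_Δ(f) ≥ u_Δ(e). Let Z be the number of indices i ≠ 0 with e 0 > e i. Then (∑ i, e i) − (∑ i, f i) ≤ 2·((P − 1) − Z)·Δ. (This is the efficiency-loss bound underlying the price-of-fairness bound PoF ≤ 2((P−1)−Z)Δ/u_E for the hybrid-lexicographic rule.) -/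
open Classical Finset

/-- Hybrid-lexicographic utility for `P` classes: `P * x 0` in the fair region
(`max_i x i - min_i x i ≤ Δ`, i.e. `∀ i j, |x i - x j| ≤ Δ`), and
`x 0 + ∑_{i ≠ 0} (x i + sign (x 0 - x i) * Δ)` in the utilitarian region. -/
noncomputable def uDelta (P : ℕ) [NeZero P] (Δ : ℝ) (x : Fin P → ℝ) : ℝ :=
  if ∀ i j, |x i - x j| ≤ Δ then (P : ℝ) * x 0
  else x 0 + ∑ i ∈ Finset.univ.filter (fun i : Fin P => i ≠ 0),
    (x i + Real.sign (x 0 - x i) * Δ)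

lemma neg_one_le_sign (x : ℝ) : -1 ≤ Real.sign x := by
  rcases lt_trichotomy x 0 with h | h | h
  · rw [Real.sign_of_neg h]
  · rw [h, Real.sign_zero]; norm_num
  · rw [Real.sign_of_pos h]; norm_num

/-- If `f` lies in the fair region, `e` lies in the utilitarian region, and
`u_Δ(f) ≥ u_Δ(e)`, then the efficiency loss `∑ e − ∑ f` is at most
`2((P−1) − Z)Δ`, where `Z` is the number of indices `i ≠ 0` with `e 0 > e i`. -/
theorem hybrid_lex_efficiency_loss_bound (P : ℕ) [NeZero P] (hP : 2 ≤ P)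
    (Δ : ℝ) (hΔ : 0 ≤ Δ) (e f : Fin P → ℝ)
    (hf : ∀ i j, |f i - f j| ≤ Δ)
    (he : ¬ ∀ i j, |e i - e j| ≤ Δ)
    (hu : uDelta P Δ f ≥ uDelta P Δ e) :
    (∑ i, e i) - (∑ i, f i) ≤
      2 * (((P : ℝ) - 1) -
        ((Finset.univ.filter (fun i : Fin P => i ≠ 0 ∧ e 0 > e i)).card : ℝ)) * Δ := by
  set S := Finset.univ.filter (fun i : Fin P => i ≠ 0) with hS
  set T := Finset.univ.filter (fun i : Fin P => i ≠ 0 ∧ e 0 > e i) with hT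
  have hTS : T ⊆ S := by
    intro i hi
    simp only [hS, hT, Finset.mem_filter] at *
    tauto
  have hScard : (S.card : ℝ) = (P : ℝ) - 1 := by
    have : S = Finset.univ.erase 0 := by rw [hS, Finset.filter_ne']
    rw [this, Finset.card_erase_of_mem (Finset.mem_univ 0), Finset.card_univ,
      Fintype.card_fin]
    have : 1 ≤ P := le_trans (by norm_num) hP
    push_cast [Nat.cast_sub this]
    ring
  -- sum of e splits
  have hsplit : ∀ g : Fin P → ℝ, ∑ i, g i = g 0 + ∑ i ∈ S, g i := by
    intro g
    have : S = Finset.univ.erase 0 := by rw [hS, Finset.filter_ne']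
    rw [this, Finset.add_sum_erase _ g (Finset.mem_univ 0)]
  -- sign sum bound
  have hTcard : (∑ i ∈ T, Real.sign (e 0 - e i)) = (T.card : ℝ) := by
    rw [Finset.sum_congr rfl (fun i hi => ?_), Finset.sum_const, nsmul_eq_mul, mul_one]
    simp only [hT, Finset.mem_filter] at hi
    exact Real.sign_of_pos (by linarith [hi.2.2])
  have hSTcard : -((S.card : ℝ) - T.card) ≤ ∑ i ∈ S \ T, Real.sign (e 0 - e i) := by
    have h1 : ((S \ T).card : ℝ) = (S.card : ℝ) - T.card := by
      rw [Finset.card_sdiff_of_subset hTS]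
      exact_mod_cast Nat.cast_sub (Finset.card_le_card hTS)
    calc -((S.card : ℝ) - T.card) = ∑ _i ∈ S \ T, (-1 : ℝ) := by
            rw [Finset.sum_const, nsmul_eq_mul, h1]; ring
      _ ≤ _ := Finset.sum_le_sum fun i _ => neg_one_le_sign _
  have hsign : (2 * (T.card : ℝ) - S.card) ≤ ∑ i ∈ S, Real.sign (e 0 - e i) := by
    have := Finset.sum_sdiff (f := fun i => Real.sign (e 0 - e i)) hTS
    rw [← this, hTcard]
    linarith
  -- uDelta values
  have huf : uDelta P Δ f = (P : ℝ) * f 0 := if_pos hf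
  have hue : uDelta P Δ e = e 0 + ∑ i ∈ S, (e i + Real.sign (e 0 - e i) * Δ) :=
    if_neg he
  rw [huf, hue] at hu
  have hesum : ∑ i ∈ S, (e i + Real.sign (e 0 - e i) * Δ)
      = (∑ i ∈ S, e i) + (∑ i ∈ S, Real.sign (e 0 - e i)) * Δ := by
    rw [Finset.sum_add_distrib, Finset.sum_mul]
  rw [hesum] at hu
  -- lower bound for f sum
  have hfsum : (P : ℝ) * f 0 - ((P : ℝ) - 1) * Δ ≤ ∑ i, f i := by
    rw [hsplit f]
    have : ∑ i ∈ S, (f 0 - Δ) ≤ ∑ i ∈ S, f i :=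
      Finset.sum_le_sum fun i _ => by
        have := abs_le.mp (hf 0 i); linarith [this.1]
    rw [Finset.sum_const, nsmul_eq_mul, hScard] at this
    linarith
  have hmul : (2 * (T.card : ℝ) - S.card) * Δ
      ≤ (∑ i ∈ S, Real.sign (e 0 - e i)) * Δ :=
    mul_le_mul_of_nonneg_right hsign hΔ
  rw [hsplit e]
  rw [hScard] at hmul
  nlinarith [hmul, hfsum, hu]
end

section
/- Let Δ ≥ 0 be a real number and let (e_L, e_H) and (f_L, f_H) be two pairs of real utilities. If u_Δ(f_L, f_H) ≥ u_Δ(e_L, e_H), then (e_L + e_H) − (f_L + f_H) ≤ 2Δ. (Two-class efficiency-loss bound for the hybrid-lexicographic rule applied to kidney exchange.) -/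
/-- Two-class hybrid-lexicographic utility: `x + y − Δ` if `x − y > Δ`,
`2y` if `|x − y| ≤ Δ`, and `x + y + Δ` if `y − x > Δ`. -/
noncomputable def uD (Δ : ℝ) (x y : ℝ) : ℝ :=
  if x - y > Δ then x + y - Δ
  else if |x - y| ≤ Δ then 2 * y
  else x + y + Δ

/-! For `Δ ≥ 0` the hybrid utility `u_Δ(x, y)` stays within `Δ` of the total utility `x + y`,
so preferring `f` to `e` under `u_Δ` can cost at most `2Δ` in total utility. -/

lemma add_sub_le_uD {Δ : ℝ} (hΔ : 0 ≤ Δ) (x y : ℝ) : x + y - Δ ≤ uD Δ x y := by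
  unfold uD
  split_ifs with _ hclose
  · exact le_rfl
  · linarith [(abs_le.mp hclose).2]
  · linarith

lemma uD_le_add_add {Δ : ℝ} (hΔ : 0 ≤ Δ) (x y : ℝ) : uD Δ x y ≤ x + y + Δ := by
  unfold uD
  split_ifs with _ hclose
  · linarith
  · linarith [(abs_le.mp hclose).1]
  · exact le_rfl

/-- Two-class efficiency-loss bound for the hybrid-lexicographic rule:
if `u_Δ(f_L, f_H) ≥ u_Δ(e_L, e_H)` then `(e_L + e_H) − (f_L + f_H) ≤ 2Δ`. -/
theorem two_class_hybrid_efficiency_loss (Δ : ℝ) (hΔ : 0 ≤ Δ)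
    (eL eH fL fH : ℝ) (h : uD Δ fL fH ≥ uD Δ eL eH) :
    (eL + eH) - (fL + fH) ≤ 2 * Δ := by
  have : eL + eH - Δ ≤ fL + fH + Δ :=
    calc eL + eH - Δ ≤ uD Δ eL eH := add_sub_le_uD hΔ eL eH
      _ ≤ uD Δ fL fH := h
      _ ≤ fL + fH + Δ := uD_le_add_add hΔ fL fH
  linarith
end

section
/- Let μ_O, μ_A, μ_B, μ_AB be positive reals with μ_A + μ_B + μ_AB + μ_O = 1 and μ_O > μ_A > μ_B > μ_AB, and let p̄ ≥ 0 and β be reals. If β < μ_A(1 − p̄) − p̄·μ_AB, β < μ_AB(1 − p̄) − p̄·μ_AB·μ_O/μ_A, and β < μ_AB·(μ_A/(μ_A + μ_O) − p̄), then β < 1/8. (Lemma: in the matching of Proposition 2, the NDD fraction β is below 1/8.) -/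
/-- Lemma (maxbeta-small): in the matching of Proposition 2, the NDD fraction
`β` is below `1/8`. -/
theorem maxbeta_small (μO μA μB μAB pbar β : ℝ)
    (hO : 0 < μO) (hA : 0 < μA) (hB : 0 < μB) (hAB : 0 < μAB)
    (hsum : μA + μB + μAB + μO = 1)
    (hOA : μO > μA) (hABd : μA > μB) (hBAB : μB > μAB)
    (hp : 0 ≤ pbar)
    (h1 : β < μA * (1 - pbar) - pbar * μAB)
    (h2 : β < μAB * (1 - pbar) - pbar * μAB * μO / μA)
    (h3 : β < μAB * (μA / (μA + μO) - pbar)) :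
    β < 1 / 8 := by
  have hAO : 0 < μA + μO := by linarith
  have hfrac : μA / (μA + μO) < 1 / 2 := by
    rw [div_lt_div_iff₀ hAO (by norm_num)]; linarith
  have hAB4 : μAB < 1 / 4 := by linarith
  have key : μAB * (μA / (μA + μO) - pbar) ≤ μAB * (μA / (μA + μO)) := by
    apply mul_le_mul_of_nonneg_left (by linarith) hAB.le
  have : μAB * (μA / (μA + μO)) < (1/4) * (1/2) := by
    apply mul_lt_mul' hAB4.le hfrac (by positivity) (by norm_num)
  linarith
end

section
/- Let μ_O, μ_A, μ_B, μ_AB be positive reals with μ_A + μ_B + μ_AB + μ_O = 1 and μ_O > μ_A > μ_B > μ_AB, and let p̄ > 0 and β be reals. If β > μ_AB(1 − p̄) − μ_AB·μ_O·p̄/μ_A and β < μ_AB(1 − p̄) − μ_O·μ_AB/(1 − μ_AB), then β < 1/12. (Lemma: in the matching of Proposition 3, the NDD fraction β is below 1/12.) -/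
/-- Lemma (maxbeta-mid11): in the matching of Proposition 3, the NDD fraction
`β` is below `1/12`. -/
theorem maxbeta_mid11 (μO μA μB μAB pbar β : ℝ)
    (hO : 0 < μO) (hA : 0 < μA) (hB : 0 < μB) (hAB : 0 < μAB)
    (hsum : μA + μB + μAB + μO = 1)
    (hOA : μO > μA) (hABd : μA > μB) (hBAB : μB > μAB)
    (hp : 0 < pbar)
    (h1 : β > μAB * (1 - pbar) - μAB * μO * pbar / μA)
    (h2 : β < μAB * (1 - pbar) - μO * μAB / (1 - μAB)) :
    β < 1 / 12 := by
  have hd : (0:ℝ) < 1 - μAB := by linarith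
  have hkey : μAB * μO * pbar / μA > μO * μAB / (1 - μAB) := by linarith
  -- deduce pbar > μA / (1 - μAB)
  have hpb : pbar * (1 - μAB) > μA := by
    have h3 : μAB * μO * pbar / μA * μA = μAB * μO * pbar := by field_simp
    have h4 : μO * μAB / (1 - μAB) * (1 - μAB) = μO * μAB := by field_simp
    nlinarith [mul_pos (mul_pos hAB hO) hp, mul_pos hAB hO,
      (div_lt_div_iff₀ hd hA).mp (by linarith [hkey] : μO * μAB / (1 - μAB) < μAB * μO * pbar / μA)]
  -- β < μAB * μB / (1 - μAB)
  have hb : β < μAB * μB / (1 - μAB) := by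
    have h4 : μO * μAB / (1 - μAB) = μO * μAB / (1 - μAB) := rfl
    rw [lt_div_iff₀ hd]
    have h5 : (μAB * (1 - pbar) - μO * μAB / (1 - μAB)) * (1 - μAB)
        = μAB * (1 - pbar) * (1 - μAB) - μO * μAB := by field_simp
    nlinarith [mul_lt_mul_of_pos_right h2 hd]
  have hfin : μAB * μB / (1 - μAB) < 1 / 12 := by
    rw [div_lt_iff₀ hd]
    nlinarith [mul_pos hAB hB]
  linarith
end

section
/- Let μ_O, μ_A, μ_B, μ_AB be positive reals with μ_A + μ_B + μ_AB + μ_O = 1 and μ_O > μ_A > μ_B > μ_AB, and let p̄, λ, β be reals with λ > 1 − p̄. If β > μ_AB(1 − p̄) − μ_AB·μ_O·p̄/μ_A and β < μ_AB(1 − p̄) − λ·μ_O·μ_AB/(1 − μ_AB), then β < 1/8. (Lemma: in the matching of Proposition 4, the NDD fraction β is below 1/8.) -/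
/-- Lemma (maxbeta-mid13): in the matching of Proposition 4, the NDD fraction
`β` is below `1/8`. -/
theorem maxbeta_mid13 (μO μA μB μAB pbar lam β : ℝ)
    (hO : 0 < μO) (hA : 0 < μA) (hB : 0 < μB) (hAB : 0 < μAB)
    (hsum : μA + μB + μAB + μO = 1)
    (hOA : μO > μA) (hABd : μA > μB) (hBAB : μB > μAB)
    (hlam : lam > 1 - pbar)
    (h1 : β > μAB * (1 - pbar) - μAB * μO * pbar / μA)
    (h2 : β < μAB * (1 - pbar) - lam * μO * μAB / (1 - μAB)) :
    β < 1 / 8 := by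
  have hd : 0 < 1 - μAB := by linarith
  -- from h1 < h2: lam*μO*μAB/(1-μAB) < μAB*μO*pbar/μA
  have hq : lam * μO * μAB / (1 - μAB) < μAB * μO * pbar / μA := by linarith
  rw [div_lt_div_iff₀ hd hA] at hq
  have hstep : lam * μA < pbar * (1 - μAB) := by
    nlinarith [mul_pos hO hAB]
  -- clear denominator in h2
  have e : lam * μO * μAB / (1 - μAB) * (1 - μAB) = lam * μO * μAB :=
    div_mul_cancel₀ _ hd.ne'
  have h2' : β * (1 - μAB) < μAB * (1 - pbar) * (1 - μAB) - lam * μO * μAB := by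
    nlinarith [mul_lt_mul_of_pos_right h2 hd]
  have hOAB : 0 < μO * μAB := mul_pos hO hAB
  have hE : (1:ℝ) - μAB = μA + μB + μO := by linarith
  rw [hE] at h2'
  have h3 : β * (1 - μAB) < (1 - pbar) * μAB * (μA + μB) := by
    rw [hE]
    nlinarith [mul_lt_mul_of_pos_right hlam hOAB]
  have hkey : 8 * μAB * (μA + μB) < 2 * μA + μB + μO := by
    nlinarith [sq_nonneg (μA - μB), sq_nonneg (μB - μAB), sq_nonneg (μO - μA),
      sq_nonneg (μA + μB - 2 * μAB), mul_pos hAB hA, mul_pos hAB hB]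
  clear h1 h2 h2' hq e hOAB
  rcases le_or_gt (1 - pbar) 0 with hp | hp
  · have hs : 0 < μAB * (μA + μB) := mul_pos hAB (by linarith)
    have : β * (1 - μAB) < 0 := by nlinarith
    nlinarith
  · have h4 : (1 - pbar) * (μA + (1 - μAB)) < 1 - μAB := by
      nlinarith [mul_lt_mul_of_pos_right hlam hA]
    have hs : 0 < μAB * (μA + μB) := mul_pos hAB (by linarith)
    have h5 : β * (1 - μAB) * (μA + (1 - μAB)) < μAB * (μA + μB) * (1 - μAB) := by
      nlinarith [mul_lt_mul_of_pos_right h3 (by linarith : (0:ℝ) < μA + (1 - μAB)),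
        mul_lt_mul_of_pos_right h4 hs]
    have h6 : β * (μA + (1 - μAB)) < μAB * (μA + μB) := by
      nlinarith [h5, hd]
    nlinarith [h6, hkey]
end

section
/- Let μ_O, μ_A, μ_B, μ_AB be positive reals with μ_A + μ_B + μ_AB + μ_O = 1 and μ_O > μ_A > μ_B > μ_AB, and let p̄, λ, β be reals with λ > 1 − p̄. If β > μ_AB(1 − p̄) − μ_AB·μ_O·p̄/(μ_A + μ_B) and β < μ_AB(1 − p̄) − λ·μ_O·μ_AB/(1 − μ_AB), then β < 1/10. (Lemma: in the matching of Proposition 5, the NDD fraction β is below 1/10.) -/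
/-- Lemma (maxbeta-mid3): in the matching of Proposition 5, the NDD fraction
`β` is below `1/10`. -/
theorem maxbeta_mid3 (μO μA μB μAB pbar lam β : ℝ)
    (hO : 0 < μO) (hA : 0 < μA) (hB : 0 < μB) (hAB : 0 < μAB)
    (hsum : μA + μB + μAB + μO = 1)
    (hOA : μO > μA) (hABd : μA > μB) (hBAB : μB > μAB)
    (hlam : lam > 1 - pbar)
    (h1 : β > μAB * (1 - pbar) - μAB * μO * pbar / (μA + μB))
    (h2 : β < μAB * (1 - pbar) - lam * μO * μAB / (1 - μAB)) :
    β < 1 / 10 := by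
  have hs : 0 < μA + μB := by linarith
  have hden : 0 < 1 - μAB := by linarith
  -- from h1 < h2
  have hfr : lam * μO * μAB / (1 - μAB) < μAB * μO * pbar / (μA + μB) := by linarith
  have key : lam * (μA + μB) < pbar * (1 - μAB) := by
    rw [div_lt_div_iff₀ hden hs] at hfr
    nlinarith [mul_pos hO hAB]
  -- key1 : (1-pbar)(2s+μO) < s+μO
  have key1 : (1 - pbar) * (2 * (μA + μB) + μO) < (μA + μB) + μO := by
    nlinarith [mul_lt_mul_of_pos_right hlam hs]
  have hpos : 0 < μO * μAB / (1 - μAB) := by positivity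
  have h2' : β < μAB * (1 - pbar) - (1 - pbar) * μO * μAB / (1 - μAB) := by
    have h5 := mul_lt_mul_of_pos_right hlam hpos
    have e1 : lam * μO * μAB / (1 - μAB) = lam * (μO * μAB / (1 - μAB)) := by ring
    have e2 : (1 - pbar) * μO * μAB / (1 - μAB) = (1 - pbar) * (μO * μAB / (1 - μAB)) := by
      ring
    linarith [h5, h2, e1 ▸ h2]
  have h3 : β * (1 - μAB) <
      (μAB * (1 - pbar) - (1 - pbar) * μO * μAB / (1 - μAB)) * (1 - μAB) :=
    mul_lt_mul_of_pos_right h2' hden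
  have e3 : (μAB * (1 - pbar) - (1 - pbar) * μO * μAB / (1 - μAB)) * (1 - μAB)
      = μAB * (1 - pbar) * (1 - μAB - μO) := by
    field_simp
  have key2 : β * (1 - μAB) < μAB * (1 - pbar) * (μA + μB) := by
    rw [e3] at h3
    have : 1 - μAB - μO = μA + μB := by linarith
    rwa [this] at h3
  have hsO : (0:ℝ) < μA + μB + μO := by linarith
  have k3 : β * (2 * (μA + μB) + μO) < μAB * (μA + μB) := by
    nlinarith [mul_lt_mul_of_pos_right key2 (by linarith : (0:ℝ) < 2 * (μA + μB) + μO),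
      mul_lt_mul_of_pos_right key1 (mul_pos hAB hs), hsO, mul_pos hAB hs,
      mul_pos hs hsO]
  have hABq : μAB < 1 / 4 := by linarith
  nlinarith [mul_lt_mul_of_pos_right hABq hs, k3, hs, hO]
end

section
/- Let μ_O, μ_A, μ_B, μ_AB be positive reals with μ_A + μ_B + μ_AB + μ_O = 1 and μ_O > μ_A > μ_B > μ_AB, let p̄ and β be reals with 0 < p̄ ≤ 2/5 and μ_O ≤ (3/2)·μ_A. If β > μ_AB·(1 − p̄) − μ_AB·μ_O·p̄/μ_A, then μ_AB − (1 − p̄)·μ_AB² + β·μ_O > μ_AB·(p̄ + μ_O). (Key inequality in the proof that the price of fairness in Propositions 4 and 5 is bounded by POF₀: the denominator D_B exceeds the denominator D₀.) -/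
/-- Key inequality in Lemma (prop34-bounded): under assumption
`β > μ_AB(1 − p̄) − μ_AB μ_O p̄ / μ_A`, the denominator `D_B` exceeds `D₀`,
i.e. `μ_AB − (1 − p̄)μ_AB² + βμ_O > μ_AB(p̄ + μ_O)`. -/
theorem prop34_denominator_ineq (μO μA μB μAB pbar β : ℝ)
    (hO : 0 < μO) (hA : 0 < μA) (hB : 0 < μB) (hAB : 0 < μAB)
    (hsum : μA + μB + μAB + μO = 1)
    (hOA : μO > μA) (hABd : μA > μB) (hBAB : μB > μAB)
    (hp0 : 0 < pbar) (hp : pbar ≤ 2 / 5) (hOA' : μO ≤ 3 / 2 * μA)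
    (hβ : β > μAB * (1 - pbar) - μAB * μO * pbar / μA) :
    μAB - (1 - pbar) * μAB ^ 2 + β * μO > μAB * (pbar + μO) := by
  have hβ' : β * μA > μAB * (1 - pbar) * μA - μAB * μO * pbar := by
    have h := mul_lt_mul_of_pos_right hβ hA
    have hc : μAB * μO * pbar / μA * μA = μAB * μO * pbar := by
      field_simp
    nlinarith [h, hc]
  -- Multiply goal by μA > 0 and use polynomial arithmetic
  have hβO : β * μO * μA > μAB * (1 - pbar) * μO * μA - μAB * μO ^ 2 * pbar := by
    nlinarith [mul_lt_mul_of_pos_right hβ' hO]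
  have h35 : μO + μAB ≤ 3 / 5 := by linarith
  have hE : μA * (1 - pbar) - pbar * μO * μA - (1 - pbar) * μAB * μA - μO ^ 2 * pbar ≥ 0 := by
    nlinarith [mul_nonneg (mul_nonneg hp0.le hO.le) (by linarith : (0:ℝ) ≤ 3 / 2 * μA - μO),
      mul_nonneg (mul_nonneg (by linarith : (0:ℝ) ≤ 2 / 5 - pbar) hO.le) hA.le,
      mul_nonneg (mul_nonneg (by linarith : (0:ℝ) ≤ 2 / 5 - pbar) (by linarith : (0:ℝ) ≤ 1 - μAB)) hA.le,
      mul_nonneg hA.le (by linarith : (0:ℝ) ≤ 3 / 5 - μO - μAB)]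
  have key : (μAB - (1 - pbar) * μAB ^ 2 + β * μO) * μA > μAB * (pbar + μO) * μA := by
    nlinarith [hβO, mul_nonneg hAB.le hE]
  exact lt_of_mul_lt_mul_right (by linarith [key]) hA.le
end

section
/- Let μ_O, μ_A, μ_B, μ_AB be positive reals with μ_A + μ_B + μ_AB + μ_O = 1 and μ_AB < 1, and let p̄, λ, β be reals with λ ≥ 1 − p̄, p̄ > μ_A/(1 − μ_AB + μ_A), and p̄ ≤ 1. If β < μ_AB·(1 − p̄) − λ·μ_O·μ_AB/(1 − μ_AB), then β < μ_AB·(μ_A + μ_B)/(1 − μ_AB + μ_A). (Derived upper bound on β in the proof of Lemma maxbeta-mid13.) -/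
/-- Derived upper bound on `β` in the proof of Lemma (maxbeta-mid13). -/
theorem maxbeta_mid13_upper (μO μA μB μAB pbar lam β : ℝ)
    (hO : 0 < μO) (hA : 0 < μA) (hB : 0 < μB) (hAB : 0 < μAB)
    (hsum : μA + μB + μAB + μO = 1) (hAB1 : μAB < 1)
    (hlam : lam ≥ 1 - pbar)
    (hp : pbar > μA / (1 - μAB + μA)) (hp1 : pbar ≤ 1)
    (hβ : β < μAB * (1 - pbar) - lam * μO * μAB / (1 - μAB)) :
    β < μAB * (μA + μB) / (1 - μAB + μA) := by
  have h1 : (0:ℝ) < 1 - μAB := by linarith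
  have h2 : (0:ℝ) < 1 - μAB + μA := by linarith
  set t : ℝ := 1 - pbar with ht
  have ht0 : 0 ≤ t := by simp [ht]; linarith
  have hK : (0:ℝ) < μAB * (μA + μB) := mul_pos hAB (by linarith)
  rw [gt_iff_lt, div_lt_iff₀ h2] at hp
  have h4 : t * (1 - μAB + μA) < 1 - μAB := by
    have : t * (1 - μAB + μA) = (1 - μAB + μA) - pbar * (1 - μAB + μA) := by ring
    rw [this]; linarith
  rw [lt_div_iff₀ h2]
  -- β * (1 - μAB) < μAB * t * (μA + μB)
  have h3 : β * (1 - μAB) < μAB * t * (μA + μB) := by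
    have hm := mul_lt_mul_of_pos_right hβ h1
    rw [sub_mul, div_mul_cancel₀ _ (ne_of_gt h1)] at hm
    have hlam' : t * μO * μAB ≤ lam * μO * μAB := by
      apply mul_le_mul_of_nonneg_right _ hAB.le
      exact mul_le_mul_of_nonneg_right hlam hO.le
    have : β * (1 - μAB) < μAB * t * (1 - μAB) - t * μO * μAB := by linarith
    have he : μA + μB = 1 - μAB - μO := by linarith
    calc β * (1 - μAB) < μAB * t * (1 - μAB) - t * μO * μAB := this
      _ = μAB * t * (μA + μB) := by rw [he]; ring
  rcases le_or_gt β 0 with hb | hb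
  · calc β * (1 - μAB + μA) ≤ 0 := mul_nonpos_of_nonpos_of_nonneg hb h2.le
      _ < μAB * (μA + μB) := hK
  · have step1 : β * (1 - μAB) * (1 - μAB + μA) < μAB * t * (μA + μB) * (1 - μAB + μA) :=
      mul_lt_mul_of_pos_right h3 h2
    have step2 : μAB * (μA + μB) * (t * (1 - μAB + μA)) < μAB * (μA + μB) * (1 - μAB) :=
      mul_lt_mul_of_pos_left h4 hK
    have key : β * (1 - μAB + μA) * (1 - μAB) < μAB * (μA + μB) * (1 - μAB) := by
      calc β * (1 - μAB + μA) * (1 - μAB) = β * (1 - μAB) * (1 - μAB + μA) := by ring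
        _ < μAB * t * (μA + μB) * (1 - μAB + μA) := step1
        _ = μAB * (μA + μB) * (t * (1 - μAB + μA)) := by ring
        _ < μAB * (μA + μB) * (1 - μAB) := step2
    exact lt_of_mul_lt_mul_right (by linarith [key]) h1.le
end

section
/- For every real γ > 0, the sequence N ↦ ((⌊γ·N⌋ : ℝ) − 1)/((⌊γ·N⌋ : ℝ) + N − 1) (indexed by natural numbers N) converges to γ/(γ + 1) as N → ∞. Consequently, the price of fairness of the chain construction in Theorem 7 (weighted fairness with no chain cap, a chain of N highly-sensitized patients versus a chain of ⌊(γ+1)N⌋ − 1 lowly-sensitized patients) is at least γ/(γ + 1). -/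
open Filter Topology

theorem tendsto_floor_mul_natCast_div_natCast (a : ℝ) :
    Tendsto (fun N : ℕ => (⌊a * N⌋ : ℝ) / N) atTop (𝓝 a) := by
  have hfract : Tendsto (fun N : ℕ => Int.fract (a * N) / N) atTop (𝓝 0) :=
    squeeze_zero (fun N => div_nonneg (Int.fract_nonneg _) N.cast_nonneg)
      (fun N => div_le_div_of_nonneg_right (Int.fract_lt_one _).le N.cast_nonneg)
      tendsto_one_div_atTop_nhds_zero_nat
  have hsplit : ∀ᶠ N : ℕ in atTop, a - Int.fract (a * N) / N = ⌊a * N⌋ / N := by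
    filter_upwards [eventually_ne_atTop 0] with N hN
    rw [← Int.self_sub_floor, sub_div, mul_div_cancel_right₀ _ (Nat.cast_ne_zero.2 hN)]
    ring
  simpa using (tendsto_const_nhds.sub hfract).congr' hsplit

/-- Dividing numerator and denominator by `N` reduces the limit to that of `⌊γ N⌋ / N`. -/
theorem tendsto_floor_sub_one_div_floor_add_sub_one {γ : ℝ} (hγ : γ + 1 ≠ 0) :
    Tendsto (fun N : ℕ => ((⌊γ * N⌋ : ℝ) - 1) / ((⌊γ * N⌋ : ℝ) + N - 1)) atTop
      (𝓝 (γ / (γ + 1))) := by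
  have hfloor := tendsto_floor_mul_natCast_div_natCast γ
  have hinv : Tendsto (fun N : ℕ => (1 : ℝ) / N) atTop (𝓝 0) :=
    tendsto_one_div_atTop_nhds_zero_nat
  have hlim := (hfloor.sub hinv).div ((hfloor.add_const 1).sub hinv) (by simpa using hγ)
  simp only [sub_zero] at hlim
  refine hlim.congr' ?_
  filter_upwards [eventually_ne_atTop 0] with N hN
  have hN' : (N : ℝ) ≠ 0 := Nat.cast_ne_zero.2 hN
  simp only [Pi.div_apply]
  field_simp

/-- The price-of-fairness sequence of the chain construction in Theorem 7
converges to `γ/(γ+1)`; consequently the price of fairness of the weighted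
fairness rule with no chain cap is at least `γ/(γ+1)` (values of the sequence
come arbitrarily close to, i.e. within any `ε` of, `γ/(γ+1)`). -/
theorem weighted_fairness_chain_pof (γ : ℝ) (hγ : 0 < γ) :
    Filter.Tendsto
      (fun N : ℕ => ((⌊γ * N⌋ : ℝ) - 1) / ((⌊γ * N⌋ : ℝ) + N - 1))
      Filter.atTop (nhds (γ / (γ + 1))) ∧
    ∀ ε > (0 : ℝ), ∃ N : ℕ,
      ((⌊γ * N⌋ : ℝ) - 1) / ((⌊γ * N⌋ : ℝ) + N - 1) > γ / (γ + 1) - ε := by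
  have hlim := tendsto_floor_sub_one_div_floor_add_sub_one (γ := γ) (by linarith)
  exact ⟨hlim, fun ε hε => (hlim.eventually (eventually_gt_nhds (by linarith))).exists⟩
end

section
/- For every real γ > 0, the sequence N ↦ ((⌊γ·N⌋ : ℝ) − 1)/((⌊γ·N⌋ : ℝ) + N) (indexed by natural numbers N) converges to γ/(γ + 1) as N → ∞. Consequently, the price of fairness of the cycle construction in Theorem 8 (weighted fairness with no cycle cap, a cycle through N+1 highly-sensitized patients versus a cycle through ⌊(γ+1)N⌋ lowly-sensitized patients) is at least γ/(γ + 1). -/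
/-! Since `a * x - 1 < ⌊a * x⌋ ≤ a * x`, the ratio `⌊a * x⌋ / x` tends to `a`; dividing numerator
and denominator of `(⌊a * x⌋ - 1) / (⌊a * x⌋ + x)` by `x` then gives the limit `a / (a + 1)`. -/

open Filter Topology

section FloorLimits

variable {R : Type*} [TopologicalSpace R] [Field R] [LinearOrder R] [IsStrictOrderedRing R]
  [OrderTopology R] [FloorRing R]

theorem tendsto_floor_mul_div_atTop (a : R) :
    Tendsto (fun x ↦ (⌊a * x⌋ : R) / x) atTop (𝓝 a) := by
  have lower : Tendsto (fun x : R ↦ a - x⁻¹) atTop (𝓝 a) := by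
    simpa using tendsto_const_nhds.sub (tendsto_inv_atTop_zero (𝕜 := R))
  refine tendsto_of_tendsto_of_tendsto_of_le_of_le' lower tendsto_const_nhds ?_ ?_
  all_goals filter_upwards [eventually_gt_atTop 0] with x hx
  · rw [le_div_iff₀ hx, sub_mul, inv_mul_cancel₀ hx.ne']
    linarith [Int.sub_one_lt_floor (a * x)]
  · rw [div_le_iff₀ hx]
    exact Int.floor_le (a * x)

theorem tendsto_floor_mul_sub_one_div_floor_mul_add_atTop {a : R} (ha : a + 1 ≠ 0) :
    Tendsto (fun x ↦ ((⌊a * x⌋ : R) - 1) / ((⌊a * x⌋ : R) + x)) atTop (𝓝 (a / (a + 1))) := by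
  have ratio := tendsto_floor_mul_div_atTop a
  have num : Tendsto (fun x ↦ (⌊a * x⌋ : R) / x - x⁻¹) atTop (𝓝 a) := by
    simpa using ratio.sub tendsto_inv_atTop_zero
  refine (num.div (ratio.add_const 1) ha).congr' ?_
  filter_upwards [eventually_gt_atTop 0] with x hx
  simp only [Pi.div_apply]
  field_simp

end FloorLimits

/-- The price-of-fairness sequence of the cycle construction in Theorem 8
converges to `γ/(γ+1)`; consequently the price of fairness of the weighted
fairness rule with no cycle cap is at least `γ/(γ+1)` (values of the sequence
come arbitrarily close to, i.e. within any `ε` of, `γ/(γ+1)`). -/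
theorem weighted_fairness_cycle_pof (γ : ℝ) (hγ : 0 < γ) :
    Filter.Tendsto
      (fun N : ℕ => ((⌊γ * N⌋ : ℝ) - 1) / ((⌊γ * N⌋ : ℝ) + N))
      Filter.atTop (nhds (γ / (γ + 1))) ∧
    ∀ ε > (0 : ℝ), ∃ N : ℕ,
      ((⌊γ * N⌋ : ℝ) - 1) / ((⌊γ * N⌋ : ℝ) + N) > γ / (γ + 1) - ε := by
  have pof_tendsto : Tendsto (fun N : ℕ ↦ ((⌊γ * N⌋ : ℝ) - 1) / ((⌊γ * N⌋ : ℝ) + N)) atTop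
      (𝓝 (γ / (γ + 1))) :=
    (tendsto_floor_mul_sub_one_div_floor_mul_add_atTop (by linarith)).comp
      tendsto_natCast_atTop_atTop
  exact ⟨pof_tendsto, fun ε hε ↦
    (pof_tendsto.eventually (eventually_gt_nhds (sub_lt_self _ hε))).exists⟩
end
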